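/- Let z_1 > ... > z_N be the zeros of the Hermite polynomial H_N. Define the N×N symmetric matrix S by S_{ii} = 1 + Σ_{l≠i} (z_i - z_l)^{-2} and S_{ij} = -(z_i - z_j)^{-2} for i ≠ j. Then det S = N!. -/

import Mathlib

open Finset

def IsHermiteZero (N : ℕ) (z : ℝ) : Prop :=
  Polynomial.aeval (Real.sqrt 2 * z) (Polynomial.hermite N) = 0

/-!
Mathlib's `hermite N` is the monic (probabilists') Hermite polynomial `He_N`, so `w = √2 z` runs
over its zeros. Writing `He_N = ∏ (X - w_l)` and evaluating the Hermite equation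
`y'' = x y' - N y` at `w_i` gives the Stieltjes relations `∑_{j ≠ i} 1 / (w_i - w_j) = w_i / 2`,
that is `∑_{j ≠ i} 1 / (z_i - z_j) = z_i`.

Given these relations, the identity
`(x^(k+1) - y^(k+1)) / (x-y)^2 = x (x^k - y^k) / (x-y)^2 + x^k / (x-y) - ∑_{e<k} x^e y^(k-1-e)`,
summed over `y = z_l`, `l ≠ i`, shows by induction on `k` that `S` sends the vector `(z_i ^ k)_i`
to the values at the `z_i` of a polynomial of degree `k` with leading coefficient `k + 1`. So
`S V = V T` for the (invertible) Vandermonde matrix `V` of the `z_i` and an upper triangular `T`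
with diagonal `1, 2, …, N`, whence `det S = det T = N!`.
-/

open Polynomial

namespace Polynomial

section RootSums

variable {ι K : Type*} [DecidableEq ι] [Field K]

theorem eval_derivative_prod_X_sub_C {s : Finset ι} {a : ι → K} {x : K}
    (hx : ∀ l ∈ s, x ≠ a l) :
    (derivative (∏ l ∈ s, (X - C (a l)))).eval x =
      (∏ l ∈ s, (X - C (a l))).eval x * ∑ l ∈ s, (x - a l)⁻¹ := by
  induction s using Finset.induction_on with
  | empty => simp
  | insert j s hj ih =>
    have hxj : x - a j ≠ 0 := sub_ne_zero.mpr (hx j (mem_insert_self j s))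
    rw [prod_insert hj, sum_insert hj, derivative_mul, eval_add, eval_mul, eval_mul,
      ih fun l hl => hx l (mem_insert_of_mem hl)]
    simp only [derivative_X_sub_C, eval_one, eval_sub, eval_X, eval_C, eval_mul]
    field_simp

variable [Fintype ι] {w : ι → K}

theorem eval_derivative_prod_X_sub_C_self (i : ι) :
    (derivative (∏ l, (X - C (w l)))).eval (w i) = ∏ l ∈ univ.erase i, (w i - w l) := by
  rw [← mul_prod_erase univ _ (mem_univ i)]
  simp [eval_prod]

theorem eval_derivative_derivative_prod_X_sub_C_self (hw : Function.Injective w) (i : ι) :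
    (derivative (derivative (∏ l, (X - C (w l))))).eval (w i) =
      2 * (derivative (∏ l, (X - C (w l)))).eval (w i) * ∑ j ∈ univ.erase i, (w i - w j)⁻¹ := by
  have hne : ∀ l ∈ univ.erase i, w i ≠ w l := fun l hl => hw.ne (ne_of_mem_erase hl).symm
  rw [← mul_prod_erase univ _ (mem_univ i)]
  simp only [derivative_mul, derivative_X_sub_C, eval_add, eval_mul, eval_sub, eval_X, eval_C,
    sub_self, zero_mul, add_zero, one_mul, derivative_add]
  rw [eval_derivative_prod_X_sub_C hne]
  ring

end RootSums

theorem Monic.eq_prod_X_sub_C_of_injective {ι K : Type*} [Fintype ι] [Field K]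
    {p : K[X]} {w : ι → K} (hp : p.Monic) (hdeg : p.natDegree = Fintype.card ι)
    (hw : Function.Injective w) (hroot : ∀ i, p.eval (w i) = 0) :
    p = ∏ l, (X - C (w l)) := by
  have hprod := monic_prod_X_sub_C w univ
  refine eq_of_degree_le_of_eval_index_eq univ hw.injOn ?_ ?_ ?_ fun i _ => ?_
  · rw [degree_eq_natDegree hp.ne_zero, hdeg, card_univ]
  · rw [degree_eq_natDegree hp.ne_zero, degree_eq_natDegree hprod.ne_zero, hdeg,
      natDegree_finsetProd_X_sub_C_eq_card, card_univ]
  · rw [hp.leadingCoeff, hprod.leadingCoeff]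
  · rw [hroot, eval_prod, prod_eq_zero (mem_univ i) (by simp)]

theorem derivative_hermite_succ (n : ℕ) :
    derivative (hermite (n + 1)) = (n + 1 : ℤ[X]) * hermite n := by
  induction n with
  | zero => simp [hermite_zero]
  | succ n ih =>
    have hd : derivative (hermite n) = X * hermite n - hermite (n + 1) := by
      rw [hermite_succ n]
      ring
    rw [hermite_succ (n + 1), derivative_sub, derivative_mul, derivative_X, one_mul, ih,
      derivative_mul, hd, derivative_add, derivative_natCast, derivative_one, add_zero, zero_mul,
      zero_add]
    push_cast
    ring

theorem derivative_derivative_hermite (n : ℕ) :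
    derivative (derivative (hermite n)) = X * derivative (hermite n) - (n : ℤ[X]) * hermite n := by
  have h := congrArg derivative (hermite_succ n)
  rw [derivative_hermite_succ, derivative_sub, derivative_mul, derivative_X, one_mul] at h
  linear_combination h

theorem sum_inv_sub_of_aeval_hermite_eq_zero {K : Type*} [Field K] [CharZero K] {n : ℕ}
    {w : Fin n → K} (hw : Function.Injective w) (hroot : ∀ i, aeval (w i) (hermite n) = 0) (i : Fin n) :
    ∑ j ∈ univ.erase i, (w i - w j)⁻¹ = w i / 2 := by
  set p := (hermite n).map (Int.castRingHom K)
  have hroot' : ∀ j, p.eval (w j) = 0 := fun j => by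
    rw [← hroot j, aeval_def, algebraMap_int_eq, eval_map]
  have hp : p = ∏ l, (X - C (w l)) :=
    ((hermite_monic n).map _).eq_prod_X_sub_C_of_injective
      (by rw [(hermite_monic n).natDegree_map, natDegree_hermite, Fintype.card_fin]) hw hroot'
  have hode : (derivative (derivative p)).eval (w i) = w i * (derivative p).eval (w i) := by
    have := congrArg (fun q => (q.map (Int.castRingHom K)).eval (w i))
      (derivative_derivative_hermite n)
    simpa [p, derivative_map, hroot' i] using this
  rw [hp, eval_derivative_derivative_prod_X_sub_C_self hw] at hode
  have hne : (derivative (∏ l, (X - C (w l)))).eval (w i) ≠ 0 := by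
    rw [eval_derivative_prod_X_sub_C_self]
    exact prod_ne_zero_iff.mpr fun l hl => sub_ne_zero.mpr (hw.ne (ne_of_mem_erase hl).symm)
  exact mul_left_cancel₀ hne (by linear_combination hode / 2)

end Polynomial

theorem sum_inv_sub_of_isHermiteZero {n : ℕ} {z : Fin n → ℝ} (hz : Function.Injective z)
    (hzero : ∀ i, IsHermiteZero n (z i)) (i : Fin n) :
    ∑ j ∈ univ.erase i, (z i - z j)⁻¹ = z i := by
  have hs : Real.sqrt 2 ≠ 0 := by positivity
  have hw := sum_inv_sub_of_aeval_hermite_eq_zero (w := fun j => Real.sqrt 2 * z j)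
    ((mul_right_injective₀ hs).comp hz) hzero i
  simp only [← mul_sub, mul_inv, ← mul_sum] at hw
  field_simp at hw
  rw [Real.sq_sqrt zero_le_two] at hw
  simp only [one_div] at hw
  linarith

section PowerSums

variable {ι K : Type*} [Fintype ι] [DecidableEq ι] [Field K]

theorem inv_sq_mul_pow_succ_sub_pow_succ {x y : K} (h : x ≠ y) (k : ℕ) :
    ((x - y) ^ 2)⁻¹ * (x ^ (k + 1) - y ^ (k + 1)) =
      x * (((x - y) ^ 2)⁻¹ * (x ^ k - y ^ k)) + x ^ k * (x - y)⁻¹ -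
        ∑ e ∈ range k, x ^ e * y ^ (k - 1 - e) := by
  have hxy : x - y ≠ 0 := sub_ne_zero.mpr h
  rw [← mul_div_cancel_right₀ (∑ e ∈ range k, x ^ e * y ^ (k - 1 - e)) hxy, geom_sum₂_mul]
  field_simp
  ring

theorem sum_erase_geom_sum₂ (z : ι → K) (i : ι) (k : ℕ) :
    ∑ l ∈ univ.erase i, ∑ e ∈ range k, z i ^ e * z l ^ (k - 1 - e) =
      ∑ e ∈ range k, (∑ l, z l ^ (k - 1 - e)) * z i ^ e - k * z i ^ (k - 1) := by
  rw [sum_comm, ← geom_sum₂_self, ← sum_sub_distrib]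
  refine sum_congr rfl fun e _ => ?_
  rw [← mul_sum, sum_erase_eq_sub (mem_univ i)]
  ring

theorem exists_eval_eq_sum_inv_sq_mul_pow_sub_pow {z : ι → K} (hz : Function.Injective z)
    (hstieltjes : ∀ i, ∑ j ∈ univ.erase i, (z i - z j)⁻¹ = z i) (k : ℕ) :
    ∃ Q : K[X], Q.natDegree ≤ k ∧ Q.coeff k = k ∧
      ∀ i, ∑ l ∈ univ.erase i, ((z i - z l) ^ 2)⁻¹ * (z i ^ k - z l ^ k) = Q.eval (z i) := by
  induction k with
  | zero => exact ⟨0, by simp⟩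
  | succ k ih =>
    obtain ⟨Q, hdeg, hcoeff, heval⟩ := ih
    set L : K[X] := ∑ e ∈ range k, C (∑ l, z l ^ (k - 1 - e)) * X ^ e with hL
    have hLdeg : L.natDegree ≤ k := natDegree_sum_le_of_forall_le _ _ fun e he =>
      (natDegree_C_mul_X_pow_le _ _).trans (mem_range.mp he).le
    refine ⟨X * Q + X ^ (k + 1) + C (k : K) * X ^ (k - 1) - L, ?_, ?_, fun i => ?_⟩
    · clear_value L
      compute_degree
      omega
    · rw [coeff_sub, coeff_eq_zero_of_natDegree_lt (by omega : L.natDegree < k + 1)]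
      rw [coeff_add, coeff_add, coeff_X_mul, hcoeff, coeff_X_pow_self, coeff_C_mul_X_pow,
        if_neg (by omega), add_zero, sub_zero, Nat.cast_succ]
    · have hne : ∀ l ∈ univ.erase i, z i ≠ z l := fun l hl => hz.ne (ne_of_mem_erase hl).symm
      rw [sum_congr rfl fun l hl => inv_sq_mul_pow_succ_sub_pow_succ (hne l hl) k,
        sum_sub_distrib, sum_add_distrib, ← mul_sum, ← mul_sum, heval, hstieltjes,
        sum_erase_geom_sum₂]
      simp only [hL, eval_sub, eval_add, eval_mul, eval_X, eval_pow, eval_C, eval_finsetSum]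
      ring

theorem sum_apply_mul_pow_eq {z : ι → K} {S : Matrix ι ι K}
    (hS : ∀ i j, S i j =
      if i = j then 1 + ∑ l ∈ univ.erase i, ((z i - z l) ^ 2)⁻¹ else -((z i - z j) ^ 2)⁻¹)
    (i : ι) (k : ℕ) :
    ∑ l, S i l * z l ^ k =
      z i ^ k + ∑ l ∈ univ.erase i, ((z i - z l) ^ 2)⁻¹ * (z i ^ k - z l ^ k) := by
  have hoff : ∀ l ∈ univ.erase i, S i l * z l ^ k = -(((z i - z l) ^ 2)⁻¹ * z l ^ k) :=
    fun l hl => by rw [hS, if_neg (ne_of_mem_erase hl).symm, neg_mul]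
  rw [← add_sum_erase _ _ (mem_univ i), hS i i, if_pos rfl, sum_congr rfl hoff,
    sum_neg_distrib, add_mul, one_mul, sum_mul]
  simp only [mul_sub, sum_sub_distrib]
  ring

end PowerSums

theorem Matrix.det_eq_prod_coeff_of_sum_mul_pow_eq_eval {K : Type*} [Field K] {n : ℕ}
    (A : Matrix (Fin n) (Fin n) K) {z : Fin n → K} (hz : Function.Injective z)
    (P : Fin n → K[X]) (hdeg : ∀ k, (P k).natDegree ≤ k)
    (hA : ∀ i (k : Fin n), ∑ l, A i l * z l ^ (k : ℕ) = (P k).eval (z i)) :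
    A.det = ∏ k, (P k).coeff k := by
  set T : Matrix (Fin n) (Fin n) K := Matrix.of fun m k => (P k).coeff m
  have hT : T.BlockTriangular id := fun m k hkm =>
    coeff_eq_zero_of_natDegree_lt ((hdeg k).trans_lt hkm)
  have hAV : A * Matrix.vandermonde z = Matrix.vandermonde z * T := by
    ext i k
    simp only [Matrix.mul_apply, Matrix.vandermonde_apply, hA, T, Matrix.of_apply]
    rw [eval_eq_sum_range' ((hdeg k).trans_lt k.isLt),
      ← Fin.sum_univ_eq_sum_range fun m => (P k).coeff m * z i ^ m]
    exact sum_congr rfl fun m _ => mul_comm _ _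
  have hV : (Matrix.vandermonde z).det ≠ 0 := Matrix.det_vandermonde_ne_zero_iff.mpr hz
  have hdet := congrArg Matrix.det hAV
  rw [Matrix.det_mul, Matrix.det_mul, mul_comm (Matrix.vandermonde z).det] at hdet
  rw [mul_right_cancel₀ hV hdet, Matrix.det_of_isUpperTriangular hT]
  rfl

theorem stmt_3 (N : ℕ) (z : Fin N → ℝ) (hord : StrictAnti z)
    (hzero : ∀ i, IsHermiteZero N (z i))
    (S : Matrix (Fin N) (Fin N) ℝ)
    (hS : ∀ i j, S i j =
      if i = j then 1 + ∑ l ∈ Finset.univ.erase i, ((z i - z l) ^ 2)⁻¹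
      else -((z i - z j) ^ 2)⁻¹) :
    S.det = (N.factorial : ℝ) := by
  have hz := hord.injective
  choose Q hdeg hcoeff heval using
    exists_eval_eq_sum_inv_sq_mul_pow_sub_pow hz (sum_inv_sub_of_isHermiteZero hz hzero)
  rw [S.det_eq_prod_coeff_of_sum_mul_pow_eq_eval hz (fun k => X ^ (k : ℕ) + Q k)
    (fun k => natDegree_add_le_of_degree_le (natDegree_X_pow_le _) (hdeg k))
    (fun i k => by rw [sum_apply_mul_pow_eq hS, heval, eval_add, eval_pow, eval_X])]
  simp only [coeff_add, coeff_X_pow_self, hcoeff, add_comm (1 : ℝ)]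
  rw [Fin.prod_univ_eq_prod_range (fun k => (k : ℝ) + 1), ← prod_range_add_one_eq_factorial]
  push_cast
  rfl
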